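/- Let X ≥ 1/2, E₀ ≥ 0, C₁ ≥ 0, let G : [−X, X] → [0, ∞) be continuous, and let Θ : [−X, X] → ℝ be twice continuously differentiable with Θ(s) ≤ 2E₀ for all s ∈ [−X, X], satisfying the delay differential inequality Θ''(s) − (3/2)·Θ(s) + (1/8)·(Θ(s − 1/2) + Θ(s + 1/2)) ≥ −C₁·G(s) for every s ∈ (−X + 1/2, X − 1/2). Then for every s ∈ [−X, X] one has Θ(s) ≤ 2E₀·(e^{s − X + 1} + e^{−s − X + 1}) + (C₁/2)·∫_{−X}^{X} e^{−|s − q|}·G(q) dq. -/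

import Mathlib

/-!
The comparison function `f(s) = 2E₀(e^{s-X+1} + e^{-s-X+1}) + (C₁/2) ∫ e^{-|s-q|} G(q) dq`
satisfies `f'' = f - C₁G` (the exponentials solve `h'' = h`, and `e^{-|x|}/2` is the Green's
function of `1 - d²/ds²`), and `f(s ± 1/2) ≤ e^{1/2} f(s) ≤ 2 f(s)`, so `L f ≤ -C₁G` for
`L h = h'' - (3/2) h + (1/8) (h(· - 1/2) + h(· + 1/2))`. Hence
`w = f - Θ` satisfies `L w ≤ 0` in the interior, while `w ≥ 0` on the boundary layers
`|s| ≥ X - 1/2`, where `f ≥ 2E₀ ≥ Θ`. At a negative interior minimum `s₀` of `w` we would have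
`w''(s₀) ≥ 0` and `w(s₀ ± 1/2) ≥ w(s₀)`, hence `L w(s₀) ≥ -(5/4) w(s₀) > 0`.
-/

open Real Set Filter Topology intervalIntegral

theorem IsLocalMin.second_deriv_nonneg {f f' : ℝ → ℝ} {x f'' : ℝ} (h : IsLocalMin f x)
    (hf : ∀ᶠ y in 𝓝 x, HasDerivAt f (f' y) y) (hf' : HasDerivAt f' f'' x) : 0 ≤ f'' := by
  by_contra! hneg
  have hcrit : f' x = 0 := h.hasDerivAt_eq_zero hf.self_of_nhds
  have hslope : ∀ᶠ y in 𝓝 x, y ≠ x → slope f' x y < 0 :=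
    eventually_nhdsWithin_iff.1 <|
      (hasDerivAt_iff_tendsto_slope.1 hf').eventually (eventually_lt_nhds hneg)
  obtain ⟨l, u, hx, hsub⟩ := mem_nhds_iff_exists_Ioo_subset.1 (hslope.and (hf.and h))
  have hlx : l < (l + x) / 2 := by linarith [hx.1]
  have hyx : (l + x) / 2 < x := by linarith [hx.1]
  have hIcc : Icc ((l + x) / 2) x ⊆ Ioo l u := Icc_subset_Ioo hlx hx.2
  -- `f' x = 0` and `f'` decreases through `x`, so `f' > 0` just left of `x`, where `f` then
  -- increases strictly by the mean value theorem.
  obtain ⟨c, hc, hmvt⟩ := exists_hasDerivAt_eq_slope f f' hyx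
    (fun y hy => ((hsub (hIcc hy)).2.1.continuousAt).continuousWithinAt)
    (fun y hy => (hsub (hIcc (Ioo_subset_Icc_self hy))).2.1)
  have hc' : 0 < f' c := by
    have := (hsub (hIcc (Ioo_subset_Icc_self hc))).1 hc.2.ne
    rw [slope_def_field, hcrit, sub_zero] at this
    exact (div_neg_iff.1 this).elim (fun h => h.1) fun h => absurd h.2 (by linarith [hc.2])
  have hmin : f x ≤ f ((l + x) / 2) := (hsub (hIcc (left_mem_Icc.2 hyx.le))).2.2
  rw [hmvt, lt_div_iff₀ (by linarith)] at hc'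
  linarith

theorem nonneg_of_delay_inequality {w w' w'' : ℝ → ℝ} {a b δ c d : ℝ}
    (hδ : 0 ≤ δ) (hd : 0 ≤ d) (hcd : 2 * d < c) (hw : ContinuousOn w (Icc a b))
    (hw' : ∀ t ∈ Ioo a b, HasDerivAt w (w' t) t)
    (hw'' : ∀ t ∈ Ioo (a + δ) (b - δ), HasDerivAt w' (w'' t) t)
    (hbdry : ∀ t ∈ Icc a b, t ∉ Ioo (a + δ) (b - δ) → 0 ≤ w t)
    (hL : ∀ t ∈ Ioo (a + δ) (b - δ), w'' t - c * w t + d * (w (t - δ) + w (t + δ)) ≤ 0) :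
    ∀ t ∈ Icc a b, 0 ≤ w t := by
  intro t ht
  by_contra! hneg
  obtain ⟨s, hs, hmin⟩ := isCompact_Icc.exists_isMinOn ⟨t, ht⟩ hw
  have hws : w s < 0 := (hmin ht).trans_lt hneg
  have hsδ : s ∈ Ioo (a + δ) (b - δ) := by
    by_contra hout
    exact (hbdry s hs hout).not_gt hws
  have hsab : s ∈ Ioo a b := ⟨by linarith [hsδ.1], by linarith [hsδ.2]⟩
  have hconv : 0 ≤ w'' s :=
    (hmin.isLocalMin (Icc_mem_nhds hsab.1 hsab.2)).second_deriv_nonneg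
      (eventually_of_mem (Ioo_mem_nhds hsab.1 hsab.2) hw') (hw'' s hsδ)
  have hleft : w s ≤ w (s - δ) := hmin ⟨by linarith [hsδ.1], by linarith [hsδ.2]⟩
  have hright : w s ≤ w (s + δ) := hmin ⟨by linarith [hsδ.1], by linarith [hsδ.2]⟩
  nlinarith [hL s hsδ, mul_le_mul_of_nonneg_left (add_le_add hleft hright) hd]

theorem ContDiffOn.hasDerivAt_deriv_Icc {f : ℝ → ℝ} {a b x : ℝ}
    (hf : ContDiffOn ℝ 2 f (Icc a b)) (hx : x ∈ Ioo a b) :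
    HasDerivAt (deriv f) (iteratedDerivWithin 2 f (Icc a b) x) x := by
  rw [iteratedDerivWithin_eq_iteratedDeriv (uniqueDiffOn_Icc (hx.1.trans hx.2))
    (hf.contDiffAt (Icc_mem_nhds hx.1 hx.2)) (Ioo_subset_Icc_self hx),
    iteratedDeriv_succ, iteratedDeriv_one]
  have hf' : ContDiffOn ℝ 1 (deriv f) (Ioo a b) :=
    (hf.mono Ioo_subset_Icc_self).deriv_of_isOpen isOpen_Ioo (by norm_num)
  exact ((hf'.contDiffAt (Ioo_mem_nhds hx.1 hx.2)).differentiableAt one_ne_zero).hasDerivAt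

/-- For positive `f` this says that `log ∘ f` is `1`-Lipschitz. -/
def ExpGrowthBounded (f : ℝ → ℝ) : Prop :=
  ∀ t u, f u ≤ exp |u - t| * f t

namespace ExpGrowthBounded

variable {f g : ℝ → ℝ}

theorem add (hf : ExpGrowthBounded f) (hg : ExpGrowthBounded g) :
    ExpGrowthBounded (fun s => f s + g s) := fun t u => by
  rw [mul_add]; exact add_le_add (hf t u) (hg t u)

theorem const_mul (hf : ExpGrowthBounded f) {c : ℝ} (hc : 0 ≤ c) :
    ExpGrowthBounded (fun s => c * f s) := fun t u => by
  rw [mul_left_comm]; exact mul_le_mul_of_nonneg_left (hf t u) hc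

theorem continuous (hf : ExpGrowthBounded f) : Continuous f := by
  refine continuous_iff_continuousAt.2 fun t => ?_
  have hlim : ∀ σ : ℝ, Tendsto (fun u => exp (σ * |u - t|) * f t) (𝓝 t) (𝓝 (f t)) := by
    intro σ
    have : Continuous fun u => exp (σ * |u - t|) * f t := by fun_prop
    simpa using this.tendsto t
  refine tendsto_of_tendsto_of_tendsto_of_le_of_le (hlim (-1)) (hlim 1) (fun u => ?_) fun u => ?_
  · calc exp (-1 * |u - t|) * f t ≤ exp (-1 * |u - t|) * (exp |u - t| * f u) := by
          gcongr; simpa [abs_sub_comm] using hf u t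
      _ = f u := by rw [← mul_assoc, ← exp_add]; simp
  · simpa using hf t u

theorem le_two_mul (hf : ExpGrowthBounded f) {t u : ℝ} (ht : 0 ≤ f t) (hu : |u - t| ≤ 1 / 2) :
    f u ≤ 2 * f t := by
  have hexp : exp |u - t| ≤ 2 := by
    have hsq : exp (1 / 2) * exp (1 / 2) = exp 1 := by rw [← exp_add]; norm_num
    have hmono := exp_le_exp.2 hu
    nlinarith [exp_one_lt_three, exp_pos (1 / 2)]
  exact (hf t u).trans (mul_le_mul_of_nonneg_right hexp ht)

end ExpGrowthBounded

theorem expGrowthBounded_exp_add_exp (X : ℝ) :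
    ExpGrowthBounded (fun s => exp (s - X + 1) + exp (-s - X + 1)) := fun t u => by
  rw [mul_add, ← exp_add, ← exp_add]
  exact add_le_add (exp_le_exp.2 (by linarith [le_abs_self (u - t)]))
    (exp_le_exp.2 (by linarith [neg_abs_le (u - t)]))

theorem one_le_exp_add_exp {X t : ℝ} (ht : t ∉ Ioo (-X + 1) (X - 1)) :
    1 ≤ exp (t - X + 1) + exp (-t - X + 1) := by
  rw [mem_Ioo, not_and_or, not_lt, not_lt] at ht
  rcases ht with ht | ht
  · linarith [one_le_exp (show 0 ≤ -t - X + 1 by linarith), exp_pos (t - X + 1)]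
  · linarith [one_le_exp (show 0 ≤ t - X + 1 by linarith), exp_pos (-t - X + 1)]

section ExpKernel

variable {a b t : ℝ} {G : ℝ → ℝ}

theorem exp_neg_abs_sub_le (s t q : ℝ) : exp (-|s - q|) ≤ exp |s - t| * exp (-|t - q|) := by
  rw [← exp_add]
  exact exp_le_exp.2 (by linarith [abs_sub_le t s q, abs_sub_comm s t])

theorem integral_exp_neg_abs_mul_nonneg (hab : a ≤ b) (hG : ∀ q ∈ Icc a b, 0 ≤ G q) (s : ℝ) :
    0 ≤ ∫ q in a..b, exp (-|s - q|) * G q :=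
  integral_nonneg hab fun q hq => mul_nonneg (exp_pos _).le (hG q hq)

theorem expGrowthBounded_integral_exp_neg_abs_mul (hab : a ≤ b) (hGc : ContinuousOn G (Icc a b))
    (hG : ∀ q ∈ Icc a b, 0 ≤ G q) :
    ExpGrowthBounded (fun s => ∫ q in a..b, exp (-|s - q|) * G q) := fun t u => by
  have hint : ∀ s, IntervalIntegrable (fun q => exp (-|s - q|) * G q) MeasureTheory.volume a b :=
    fun s => ((by fun_prop : Continuous fun q => exp (-|s - q|)).continuousOn.mul hGc
      ).intervalIntegrable_of_Icc hab
  rw [← integral_const_mul]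
  refine integral_mono_on hab (hint u) ((hint t).const_mul _) fun q hq => ?_
  rw [← mul_assoc]
  exact mul_le_mul_of_nonneg_right (exp_neg_abs_sub_le u t q) (hG q hq)

/-- `∫_a^b k(s - q) G(q) dq` for the kernel `k(x) = c₁ e^{-x}` (`x > 0`), `k(x) = c₂ e^{x}`
(`x < 0`); for `c₁ = c₂ = 1` this is `∫_a^b e^{-|s - q|} G(q) dq`. -/
noncomputable def splitExpKernel (G : ℝ → ℝ) (a b c₁ c₂ s : ℝ) : ℝ :=
  c₁ * exp (-s) * (∫ q in a..s, exp q * G q) + c₂ * exp s * ∫ q in s..b, exp (-q) * G q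

theorem integral_exp_neg_abs_mul_eq_splitExpKernel (hGc : ContinuousOn G (Icc a b)) {s : ℝ}
    (hs : s ∈ Icc a b) :
    ∫ q in a..b, exp (-|s - q|) * G q = splitExpKernel G a b 1 1 s := by
  have hint : ∀ {x y}, x ∈ Icc a b → y ∈ Icc a b →
      IntervalIntegrable (fun q => exp (-|s - q|) * G q) MeasureTheory.volume x y :=
    fun hx hy => ((by fun_prop : Continuous fun q => exp (-|s - q|)).continuousOn.mul
      (hGc.mono (uIcc_subset_Icc hx hy))).intervalIntegrable
  rw [← integral_add_adjacent_intervals (hint (left_mem_Icc.2 (hs.1.trans hs.2)) hs)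
    (hint hs (right_mem_Icc.2 (hs.1.trans hs.2))), splitExpKernel, one_mul, one_mul,
    ← integral_const_mul, ← integral_const_mul]
  congr 1 <;> refine integral_congr fun q hq => ?_
  · rw [uIcc_of_le hs.1] at hq
    simp only [abs_of_nonneg (sub_nonneg.2 hq.2), ← mul_assoc, ← exp_add, neg_sub]
    ring_nf
  · rw [uIcc_of_le hs.2] at hq
    simp only [abs_of_nonpos (sub_nonpos.2 hq.1), ← mul_assoc, ← exp_add, neg_neg]
    ring_nf

theorem hasDerivAt_integral_of_continuousOn_Icc {F : ℝ → ℝ} (hF : ContinuousOn F (Icc a b))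
    (ht : t ∈ Ioo a b) :
    HasDerivAt (fun s => ∫ q in a..s, F q) (F t) t ∧
      HasDerivAt (fun s => ∫ q in s..b, F q) (-F t) t := by
  have hmeas : StronglyMeasurableAtFilter F (𝓝 t) :=
    (hF.mono Ioo_subset_Icc_self).stronglyMeasurableAtFilter isOpen_Ioo t ht
  have hcont : ContinuousAt F t := hF.continuousAt (Icc_mem_nhds ht.1 ht.2)
  exact ⟨integral_hasDerivAt_right
      ((hF.mono (Icc_subset_Icc_right ht.2.le)).intervalIntegrable_of_Icc ht.1.le) hmeas hcont,
    integral_hasDerivAt_left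
      ((hF.mono (Icc_subset_Icc_left ht.1.le)).intervalIntegrable_of_Icc ht.2.le) hmeas hcont⟩

theorem hasDerivAt_splitExpKernel (hGc : ContinuousOn G (Icc a b)) (c₁ c₂ : ℝ)
    (ht : t ∈ Ioo a b) :
    HasDerivAt (splitExpKernel G a b c₁ c₂)
      (splitExpKernel G a b (-c₁) c₂ t + (c₁ - c₂) * G t) t := by
  have hl := (hasDerivAt_integral_of_continuousOn_Icc (F := fun q => exp q * G q)
    (continuous_exp.continuousOn.mul hGc) ht).1
  have hr := (hasDerivAt_integral_of_continuousOn_Icc (F := fun q => exp (-q) * G q)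
    ((continuous_exp.comp continuous_neg).continuousOn.mul hGc) ht).2
  have hinv : exp (-t) * exp t = 1 := by rw [← exp_add]; simp
  refine (((((hasDerivAt_neg t).exp).const_mul c₁).mul hl).add
    (((hasDerivAt_exp t).const_mul c₂).mul hr)).congr_deriv ?_
  simp only [splitExpKernel]
  linear_combination (c₁ - c₂) * G t * hinv

theorem hasDerivAt_integral_exp_neg_abs_mul (hGc : ContinuousOn G (Icc a b))
    (ht : t ∈ Ioo a b) :
    HasDerivAt (fun s => ∫ q in a..b, exp (-|s - q|) * G q)
      (splitExpKernel G a b (-1) 1 t) t := by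
  have heq : (fun s => ∫ q in a..b, exp (-|s - q|) * G q) =ᶠ[𝓝 t] splitExpKernel G a b 1 1 :=
    eventually_of_mem (Icc_mem_nhds ht.1 ht.2) fun s hs =>
      integral_exp_neg_abs_mul_eq_splitExpKernel hGc hs
  simpa using (hasDerivAt_splitExpKernel hGc 1 1 ht).congr_of_eventuallyEq heq

end ExpKernel

/-- The paper's supersolution `f_{A,B}` with `A = B = 2E₀·e`. -/
noncomputable def delaySupersolution (X E₀ C₁ : ℝ) (G : ℝ → ℝ) (s : ℝ) : ℝ :=
  2 * E₀ * (exp (s - X + 1) + exp (-s - X + 1)) + C₁ / 2 * ∫ q in (-X)..X, exp (-|s - q|) * G q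

section DelaySupersolution

variable {X E₀ C₁ : ℝ} {G : ℝ → ℝ}

theorem expGrowthBounded_delaySupersolution (hX : -X ≤ X) (hE₀ : 0 ≤ E₀) (hC₁ : 0 ≤ C₁)
    (hGc : ContinuousOn G (Icc (-X) X)) (hG : ∀ q ∈ Icc (-X) X, 0 ≤ G q) :
    ExpGrowthBounded (delaySupersolution X E₀ C₁ G) :=
  ((expGrowthBounded_exp_add_exp X).const_mul (by positivity)).add
    ((expGrowthBounded_integral_exp_neg_abs_mul hX hGc hG).const_mul (by positivity))

theorem delaySupersolution_nonneg (hX : -X ≤ X) (hE₀ : 0 ≤ E₀) (hC₁ : 0 ≤ C₁)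
    (hG : ∀ q ∈ Icc (-X) X, 0 ≤ G q) (s : ℝ) : 0 ≤ delaySupersolution X E₀ C₁ G s :=
  add_nonneg (by positivity)
    (mul_nonneg (by positivity) (integral_exp_neg_abs_mul_nonneg hX hG s))

theorem two_mul_le_delaySupersolution (hX : -X ≤ X) (hE₀ : 0 ≤ E₀) (hC₁ : 0 ≤ C₁)
    (hG : ∀ q ∈ Icc (-X) X, 0 ≤ G q) {s : ℝ} (hs : s ∉ Ioo (-X + 1) (X - 1)) :
    2 * E₀ ≤ delaySupersolution X E₀ C₁ G s :=
  le_add_of_le_of_nonneg (le_mul_of_one_le_right (by positivity) (one_le_exp_add_exp hs))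
    (mul_nonneg (by positivity) (integral_exp_neg_abs_mul_nonneg hX hG s))

theorem exists_hasDerivAt_delaySupersolution (hGc : ContinuousOn G (Icc (-X) X)) :
    ∃ f' : ℝ → ℝ, ∀ t ∈ Ioo (-X) X,
      HasDerivAt (delaySupersolution X E₀ C₁ G) (f' t) t ∧
        HasDerivAt f' (delaySupersolution X E₀ C₁ G t - C₁ * G t) t := by
  refine ⟨fun s => 2 * E₀ * (exp (s - X + 1) - exp (-s - X + 1)) +
    C₁ / 2 * splitExpKernel G (-X) X (-1) 1 s, fun t ht => ?_⟩
  have hp : HasDerivAt (fun s => exp (s - X + 1)) (exp (t - X + 1)) t := by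
    simpa using (((hasDerivAt_id t).sub_const X).add_const 1).exp
  have hm : HasDerivAt (fun s => exp (-s - X + 1)) (-exp (-t - X + 1)) t := by
    simpa using ((((hasDerivAt_id t).neg).sub_const X).add_const 1).exp
  constructor
  · refine (((hp.add hm).const_mul (2 * E₀)).add
      ((hasDerivAt_integral_exp_neg_abs_mul hGc ht).const_mul (C₁ / 2))).congr_deriv ?_
    ring
  · refine (((hp.sub hm).const_mul (2 * E₀)).add
      ((hasDerivAt_splitExpKernel hGc (-1) 1 ht).const_mul (C₁ / 2))).congr_deriv ?_
    rw [delaySupersolution,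
      integral_exp_neg_abs_mul_eq_splitExpKernel hGc (Ioo_subset_Icc_self ht), neg_neg]
    ring

end DelaySupersolution

theorem delay_comparison_estimate (X : ℝ) (hX : 1/2 ≤ X) (E₀ : ℝ) (hE₀ : 0 ≤ E₀)
    (C₁ : ℝ) (hC₁ : 0 ≤ C₁) (G : ℝ → ℝ)
    (hG : ContinuousOn G (Set.Icc (-X) X))
    (hGpos : ∀ s ∈ Set.Icc (-X) X, 0 ≤ G s)
    (Θ : ℝ → ℝ)
    (hΘ : ContDiffOn ℝ 2 Θ (Set.Icc (-X) X))
    (hΘbd : ∀ s ∈ Set.Icc (-X) X, Θ s ≤ 2 * E₀)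
    (hineq : ∀ s ∈ Set.Ioo (-X + 1/2) (X - 1/2),
      -C₁ * G s ≤ iteratedDerivWithin 2 Θ (Set.Icc (-X) X) s - (3/2) * Θ s
        + (1/8) * (Θ (s - 1/2) + Θ (s + 1/2))) :
    ∀ s ∈ Set.Icc (-X) X,
      Θ s ≤ 2 * E₀ * (Real.exp (s - X + 1) + Real.exp (-s - X + 1))
        + (C₁ / 2) * ∫ q in (-X)..X, Real.exp (-|s - q|) * G q := by
  have hXX : -X ≤ X := by linarith
  set f := delaySupersolution X E₀ C₁ G
  have hgrowth := expGrowthBounded_delaySupersolution hXX hE₀ hC₁ hG hGpos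
  have hf₀ := delaySupersolution_nonneg hXX hE₀ hC₁ hGpos
  obtain ⟨f', hf'⟩ := exists_hasDerivAt_delaySupersolution (E₀ := E₀) (C₁ := C₁) hG
  have hΘ' : ∀ t ∈ Ioo (-X) X, HasDerivAt Θ (deriv Θ t) t := fun t ht =>
    ((hΘ.contDiffAt (Icc_mem_nhds ht.1 ht.2)).differentiableAt two_ne_zero).hasDerivAt
  have hinner : Ioo (-X + 1/2) (X - 1/2) ⊆ Ioo (-X) X := Ioo_subset_Ioo (by linarith) (by linarith)
  have hdiff := nonneg_of_delay_inequality (w := fun t => f t - Θ t)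
    (w'' := fun t => f t - C₁ * G t - iteratedDerivWithin 2 Θ (Icc (-X) X) t)
    (by norm_num : (0 : ℝ) ≤ 1/2) (by norm_num : (0 : ℝ) ≤ 1/8)
    (by norm_num : 2 * (1/8 : ℝ) < 3/2)
    (hgrowth.continuous.continuousOn.sub hΘ.continuousOn)
    (fun t ht => (hf' t ht).1.sub (hΘ' t ht))
    (fun t ht => (hf' t (hinner ht)).2.sub (hΘ.hasDerivAt_deriv_Icc (hinner ht)))
    (fun t ht hout => sub_nonneg.2 <| (hΘbd t ht).trans <|
      two_mul_le_delaySupersolution hXX hE₀ hC₁ hGpos fun h =>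
        hout (Ioo_subset_Ioo (by linarith) (by linarith) h))
    (fun t ht => by
      have hl := hgrowth.le_two_mul (u := t - 1/2) (hf₀ t) (by norm_num [abs_of_pos])
      have hr := hgrowth.le_two_mul (u := t + 1/2) (hf₀ t) (by norm_num [abs_of_pos])
      linarith [hineq t ht, hf₀ t])
  exact fun s hs => sub_nonneg.1 (hdiff s hs)
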